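/- Let G be a group and ω : G³ → ℂˣ a normalized 3-cocycle. Define Ξ(g,h) := ω(h⁻¹,g⁻¹,g)/ω(h⁻¹g⁻¹,g,h) and σ_g := ω(g,g⁻¹,g). Then for all g,h ∈ G: Ξ(g,h) = Ξ(h⁻¹,g⁻¹) · σ_g σ_h / σ_{gh}. -/

import Mathlib

/-!
Besides normalization, only two kinds of instances of the cocycle identity are needed: the tuples
`(a, b, b⁻¹, c)`, where normalization kills the factor `ω(a, 1, c)`, and the single tuple
`((gh)⁻¹, g, h, (gh)⁻¹)`. The first kind gives `σ_{g⁻¹} = σ_g⁻¹` and rewrites the factors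
`ω(h⁻¹, h, (gh)⁻¹)` and `ω((gh)⁻¹, g, g⁻¹)` of the second in terms of those occurring in `Ξ`;
what remains is a linear identity in the abelian group of values.
-/

namespace ThreeCocycle

variable {G M : Type*} [Group G] [CommGroup M]

def IsCocycle (ω : G → G → G → M) : Prop :=
  ∀ g h k l : G, ω (g * h) k l * ω g h (k * l) = ω g h k * ω g (h * k) l * ω h k l

def IsNormalized (ω : G → G → G → M) : Prop :=
  ∀ g h : G, ω 1 g h = 1 ∧ ω g 1 h = 1 ∧ ω g h 1 = 1

def sigma (ω : G → G → G → M) (g : G) : M := ω g g⁻¹ g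

def xi (ω : G → G → G → M) (g h : G) : M := ω h⁻¹ g⁻¹ g / ω (h⁻¹ * g⁻¹) g h

variable {ω : G → G → G → M}

theorem IsCocycle.inv_pair (hω : IsCocycle ω) (hn : IsNormalized ω) (a b c : G) :
    ω (a * b) b⁻¹ c * ω a b (b⁻¹ * c) = ω a b b⁻¹ * ω b b⁻¹ c := by
  rw [hω, mul_inv_cancel, (hn a c).2.1, mul_one]

theorem IsCocycle.sigma_mul_sigma_inv (hω : IsCocycle ω) (hn : IsNormalized ω) (g : G) :
    sigma ω g * sigma ω g⁻¹ = 1 := by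
  simpa only [sigma, inv_inv, mul_inv_cancel, (hn _ _).1, (hn _ _).2.2, mul_one] using
    (hω.inv_pair hn g g⁻¹ g⁻¹).symm

theorem IsCocycle.xi_eq_xi_inv_mul_sigma (hω : IsCocycle ω) (hn : IsNormalized ω) (g h : G) :
    xi ω g h = xi ω h⁻¹ g⁻¹ * sigma ω g * sigma ω h / sigma ω (g * h) := by
  have main := hω (h⁻¹ * g⁻¹) g h (h⁻¹ * g⁻¹)
  have cancel₁ := hω.inv_pair hn h⁻¹ h g⁻¹
  have cancel₂ := hω.inv_pair hn g h g⁻¹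
  have cancel₃ := hω.inv_pair hn h⁻¹ g⁻¹ g⁻¹
  have sg := hω.sigma_mul_sigma_inv hn g
  have sh := hω.sigma_mul_sigma_inv hn h
  have sgh := hω.sigma_mul_sigma_inv hn (g * h)
  simp only [xi, sigma, mul_assoc, inv_inv, mul_inv_rev, mul_inv_cancel_left,
    mul_inv_cancel, inv_mul_cancel, (hn _ _).1, (hn _ _).2.2, one_mul, mul_one]
    at main cancel₁ cancel₂ cancel₃ sg sh sgh ⊢
  apply_fun Additive.ofMul at main cancel₁ cancel₂ cancel₃ sg sh sgh
  apply Additive.ofMul.injective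
  simp only [ofMul_mul, ofMul_div, ofMul_one] at *
  linear_combination (norm := abel) main - cancel₁ + cancel₂ - cancel₃ - sg - sh + sgh

end ThreeCocycle

/-- Second part of Lemma 7: for a normalized 3-cocycle `ω`, with
`Ξ(g,h) = ω(h⁻¹,g⁻¹,g)/ω(h⁻¹g⁻¹,g,h)` and `σ_g = ω(g,g⁻¹,g)`, one has
`Ξ(g,h) = Ξ(h⁻¹,g⁻¹)·σ_g σ_h / σ_{gh}`. -/
theorem Xi_eq_Xihat_dsigma
    {G : Type*} [Group G]
    (ω : G → G → G → ℂˣ)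
    (hω : ∀ g h k l : G,
      ω (g * h) k l * ω g h (k * l) = ω g h k * ω g (h * k) l * ω h k l)
    (hnorm : ∀ g h : G, ω 1 g h = 1 ∧ ω g 1 h = 1 ∧ ω g h 1 = 1)
    (Ξ : G → G → ℂˣ)
    (hΞ : ∀ g h : G, Ξ g h = ω h⁻¹ g⁻¹ g / ω (h⁻¹ * g⁻¹) g h)
    (σ : G → ℂˣ)
    (hσ : ∀ g : G, σ g = ω g g⁻¹ g) :
    ∀ g h : G, Ξ g h = Ξ h⁻¹ g⁻¹ * σ g * σ h / σ (g * h) := by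
  intro g h
  rw [hΞ, hΞ, hσ, hσ, hσ]
  exact ThreeCocycle.IsCocycle.xi_eq_xi_inv_mul_sigma (ω := ω) hω hnorm g h
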